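/- arXiv:1607.05038 — 6 statements merged into one kernel-verified Lean document; each statement's English description precedes it below -/
import Mathlib

section
/- Let p be a prime and let n, r, a, b be positive integers with r a proper divisor of n (1 ≤ r < n), and suppose n/r ≥ 3. Set t = (p^n - 1)/(p^r - 1). If 0 ≤ b ≤ a ≤ n-1 and t divides p^a + p^b - 1, then p = 2. -/
theorem stmt_0 (p n r a b : ℕ) (hp : p.Prime) (hr1 : 1 ≤ r) (hrn : r ∣ n) (hrltn : r < n)
    (h3 : 3 ≤ n / r) (hba : b ≤ a) (han : a ≤ n - 1)
    (ht : (p ^ n - 1) / (p ^ r - 1) ∣ p ^ a + p ^ b - 1) : p = 2 := by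
  have hp2 : 2 ≤ p := hp.two_le
  have hP : (2:ℤ) ≤ (p:ℤ) := by exact_mod_cast hp2
  have hP1 : (1:ℤ) < (p:ℤ) := by linarith
  have hP1' : (1:ℤ) ≤ (p:ℤ) := by linarith
  -- n ≥ 3r
  have hn3r : 3 * r ≤ n := by
    obtain ⟨m, hm⟩ := hrn
    have hr0 : 0 < r := hr1
    subst hm
    rw [Nat.mul_div_cancel_left _ hr0] at h3
    nlinarith
  -- t and its defining equation
  set t : ℕ := (p ^ n - 1) / (p ^ r - 1) with htdef
  have hdvd : p ^ r - 1 ∣ p ^ n - 1 := by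
    obtain ⟨m, hm⟩ := hrn
    have := Nat.sub_dvd_pow_sub_pow (p ^ r) 1 m
    simpa [← pow_mul, ← hm] using this
  have htmul : t * (p ^ r - 1) = p ^ n - 1 := Nat.div_mul_cancel hdvd
  have hpn1 : 1 ≤ p ^ n := Nat.one_le_pow _ _ (by omega)
  have hpr1 : 1 ≤ p ^ r := Nat.one_le_pow _ _ (by omega)
  -- move to ℤ
  have hTmul : (t:ℤ) * ((p:ℤ)^r - 1) = (p:ℤ)^n - 1 := by
    have := congrArg (Nat.cast : ℕ → ℤ) htmul
    push_cast [Nat.cast_sub hpr1, Nat.cast_sub hpn1] at this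
    linarith
  have hTn : (t:ℤ) ∣ (p:ℤ)^n - 1 := ⟨(p:ℤ)^r - 1, by linarith [hTmul]⟩
  -- t > p^(n-r)
  have hTgt : (p:ℤ)^(n-r) < (t:ℤ) := by
    have h1 : (p:ℤ)^(n-r) * ((p:ℤ)^r - 1) = (p:ℤ)^n - (p:ℤ)^(n-r) := by
      rw [mul_sub, ← pow_add, mul_one]
      congr 2
      omega
    have h2 : (1:ℤ) < (p:ℤ)^(n-r) := by
      calc (1:ℤ) < (p:ℤ) := hP1
      _ = (p:ℤ)^1 := (pow_one _).symm
      _ ≤ (p:ℤ)^(n-r) := pow_le_pow_right₀ hP1' (by omega)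
    have hprZ : (1:ℤ) < (p:ℤ)^r := by
      calc (1:ℤ) < (p:ℤ) := hP1
      _ = (p:ℤ)^1 := (pow_one _).symm
      _ ≤ (p:ℤ)^r := pow_le_pow_right₀ hP1' hr1
    have : (p:ℤ)^(n-r) * ((p:ℤ)^r - 1) < (t:ℤ) * ((p:ℤ)^r - 1) := by
      rw [h1, hTmul]; linarith
    exact lt_of_mul_lt_mul_right this (by linarith)
  have hpa1 : 1 ≤ p ^ a + p ^ b := le_trans (Nat.one_le_pow _ _ (by omega)) (Nat.le_add_right _ _)
  have hTab : (t:ℤ) ∣ (p:ℤ)^a + (p:ℤ)^b - 1 := by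
    obtain ⟨k, hk⟩ := ht
    refine ⟨(k:ℤ), ?_⟩
    have := congrArg (Nat.cast : ℕ → ℤ) hk
    push_cast [Nat.cast_sub hpa1] at this
    linarith
  have hTpos : (0:ℤ) < (t:ℤ) := by
    have : (0:ℤ) ≤ (p:ℤ)^(n-r) := by positivity
    linarith
  have hpowa : (1:ℤ) ≤ (p:ℤ)^a := one_le_pow₀ hP1'
  have hpowb : (1:ℤ) ≤ (p:ℤ)^b := one_le_pow₀ hP1'
  -- Step A : n - r ≤ a
  have hXpos : (0:ℤ) < (p:ℤ)^a + (p:ℤ)^b - 1 := by linarith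
  have hTleX : (t:ℤ) ≤ (p:ℤ)^a + (p:ℤ)^b - 1 := Int.le_of_dvd hXpos hTab
  have hba' : (p:ℤ)^b ≤ (p:ℤ)^a := pow_le_pow_right₀ hP1' hba
  have hXlt : (p:ℤ)^a + (p:ℤ)^b - 1 < (p:ℤ)^(a+1) := by
    have : (2:ℤ) * (p:ℤ)^a ≤ (p:ℤ)^(a+1) := by
      rw [pow_succ, mul_comm ((p:ℤ)^a) (p:ℤ)]
      exact mul_le_mul_of_nonneg_right hP (by positivity)
    linarith
  have hanr : n - r ≤ a := by
    have : (p:ℤ)^(n-r) < (p:ℤ)^(a+1) := by linarith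
    have := (pow_lt_pow_iff_right₀ hP1).mp this
    omega
  -- c = n - a
  set c : ℕ := n - a with hcdef
  have hc1 : 1 ≤ c := by omega
  have hcr : c ≤ r := by omega
  have hacn : a + c = n := by omega
  set d : ℕ := b + c with hddef
  have hdn : d ≤ n := by omega
  -- T ∣ p^d - p^c + 1
  have hTY : (t:ℤ) ∣ (p:ℤ)^d - (p:ℤ)^c + 1 := by
    have h1 : (t:ℤ) ∣ (p:ℤ)^c * ((p:ℤ)^a + (p:ℤ)^b - 1) := Dvd.dvd.mul_left hTab _
    have h2 : (p:ℤ)^c * ((p:ℤ)^a + (p:ℤ)^b - 1) = ((p:ℤ)^n - 1) + ((p:ℤ)^d - (p:ℤ)^c + 1) := by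
      have e1 : (p:ℤ)^n = (p:ℤ)^a * (p:ℤ)^c := by rw [← hacn, pow_add]
      have e2 : (p:ℤ)^d = (p:ℤ)^b * (p:ℤ)^c := by rw [hddef, pow_add]
      rw [e1, e2]; ring
    rw [h2] at h1
    exact (dvd_add_right hTn).mp h1
  have hdc : (p:ℤ)^c ≤ (p:ℤ)^d := pow_le_pow_right₀ hP1' (by omega)
  have hpc2 : (2:ℤ) ≤ (p:ℤ)^c := by
    calc (2:ℤ) ≤ (p:ℤ) := hP
    _ = (p:ℤ)^1 := (pow_one _).symm
    _ ≤ (p:ℤ)^c := pow_le_pow_right₀ hP1' hc1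
  by_cases hdeq : d = n
  · -- t ∣ p^c - 2, and 0 ≤ p^c - 2 < t, so p^c = 2
    have hZ : (t:ℤ) ∣ (p:ℤ)^c - 2 := by
      have := dvd_sub hTn hTY
      have heq : ((p:ℤ)^n - 1) - ((p:ℤ)^d - (p:ℤ)^c + 1) = (p:ℤ)^c - 2 := by
        rw [hdeq]; ring
      rwa [heq] at this
    have hlt : (p:ℤ)^c - 2 < (t:ℤ) := by
      have h1 : (p:ℤ)^c ≤ (p:ℤ)^(n-r) := pow_le_pow_right₀ hP1' (by omega)
      linarith
    have hzero : (p:ℤ)^c - 2 = 0 := by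
      rcases lt_or_eq_of_le (by linarith : (0:ℤ) ≤ (p:ℤ)^c - 2) with h | h
      · exfalso; have := Int.le_of_dvd h hZ; linarith
      · omega
    -- p^c = 2 forces p = 2
    have : ((p:ℤ))^c = 2 := by linarith
    have hpc : p ^ c = 2 := by exact_mod_cast this
    have : p ≤ p ^ c := Nat.le_self_pow (by omega) p
    omega
  · -- d < n : contradiction
    exfalso
    have hdltn : d < n := lt_of_le_of_ne hdn hdeq
    have hYpos : (0:ℤ) < (p:ℤ)^d - (p:ℤ)^c + 1 := by linarith
    have hTleY : (t:ℤ) ≤ (p:ℤ)^d - (p:ℤ)^c + 1 := Int.le_of_dvd hYpos hTY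
    -- d ≥ n - r
    have hdge : n - r ≤ d := by
      have : (p:ℤ)^(n-r) < (p:ℤ)^d := by linarith
      have := (pow_lt_pow_iff_right₀ hP1).mp this
      omega
    set c' : ℕ := n - d with hc'def
    have hc'1 : 1 ≤ c' := by omega
    have hc'r : c' ≤ r := by omega
    have hdc'n : d + c' = n := by omega
    -- t ∣ p^(c+c') - p^(c') - 1
    have hTZ : (t:ℤ) ∣ (p:ℤ)^(c+c') - (p:ℤ)^(c') - 1 := by
      have h1 : (t:ℤ) ∣ (p:ℤ)^(c') * ((p:ℤ)^d - (p:ℤ)^c + 1) := Dvd.dvd.mul_left hTY _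
      have h2 : (p:ℤ)^(c') * ((p:ℤ)^d - (p:ℤ)^c + 1)
          = ((p:ℤ)^n - 1) - ((p:ℤ)^(c+c') - (p:ℤ)^(c') - 1) := by
        have e1 : (p:ℤ)^n = (p:ℤ)^d * (p:ℤ)^(c') := by rw [← hdc'n, pow_add]
        have e2 : (p:ℤ)^(c+c') = (p:ℤ)^c * (p:ℤ)^(c') := by rw [← pow_add]
        rw [e1, e2]; ring
      rw [h2] at h1
      have := dvd_sub hTn h1
      simpa using this
    have hpc'2 : (2:ℤ) ≤ (p:ℤ)^c' := by
      calc (2:ℤ) ≤ (p:ℤ) := hP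
      _ = (p:ℤ)^1 := (pow_one _).symm
      _ ≤ (p:ℤ)^c' := pow_le_pow_right₀ hP1' hc'1
    have hZpos : (0:ℤ) < (p:ℤ)^(c+c') - (p:ℤ)^(c') - 1 := by
      have e2 : (p:ℤ)^(c+c') = (p:ℤ)^c * (p:ℤ)^(c') := by rw [pow_add]
      have h2 : (2:ℤ) * (p:ℤ)^(c') ≤ (p:ℤ)^c * (p:ℤ)^(c') :=
        mul_le_mul_of_nonneg_right hpc2 (by positivity)
      linarith
    have hTleZ : (t:ℤ) ≤ (p:ℤ)^(c+c') - (p:ℤ)^(c') - 1 := Int.le_of_dvd hZpos hTZ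
    have hZlt : (p:ℤ)^(c+c') ≤ (p:ℤ)^(n-r) := pow_le_pow_right₀ hP1' (by omega)
    linarith
end

section
/- Let p be a prime and let n, r be positive integers with r a proper divisor of n and n/r = 2 (so n = 2r). Set t = p^r + 1. If 0 ≤ b ≤ a ≤ n-1 and t divides p^a + p^b - 1, then p = 2. -/
theorem Nat.odd_add_sub_one {m n : ℕ} (hm : Odd m) (hn : Odd n) : Odd (m + n - 1) :=
  Nat.Even.sub_odd (Nat.le_add_right_of_le hm.pos) (hm.add_odd hn) odd_one

theorem stmt_1_general (p r a b : ℕ) (hp : p.Prime)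
    (ht : (p ^ r + 1) ∣ p ^ a + p ^ b - 1) : p = 2 := by
  by_contra hp2
  have hodd : Odd p := hp.odd_of_ne_two hp2
  have hsum : Odd (p ^ a + p ^ b - 1) := Nat.odd_add_sub_one hodd.pow hodd.pow
  exact Nat.not_even_iff_odd.mpr (hsum.of_dvd_nat ht) hodd.pow.add_one

theorem stmt_1 (p n r a b : ℕ) (hp : p.Prime) (hr1 : 1 ≤ r) (hrn : r ∣ n) (hrltn : r < n)
    (hn : n = 2 * r) (hba : b ≤ a) (han : a ≤ n - 1)
    (ht : (p ^ r + 1) ∣ p ^ a + p ^ b - 1) : p = 2 :=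
  stmt_1_general p r a b hp ht
end

section
/- Let p be a prime, m a positive integer, G a cyclic group of order dividing p^m - 1 such that m is the multiplicative order of p modulo |G|. If there exists k with 0 ≤ k ≤ m-1 such that p^k ≡ -1 (mod |G|), and there exists a divisor r of m with 1 ≤ r < m such that (p^m - 1)/(p^r - 1) divides p^k + 1, then k ≥ 1, m = 2k, r = k, and (p^m - 1)/(p^r - 1) = p^k + 1. -/
theorem stmt_3 (p m k r : ℕ) (hp : p.Prime) (hm : 1 ≤ m)
    (G : Type) [Group G] [IsCyclic G] [Finite G]
    (hdvd : Nat.card G ∣ p ^ m - 1)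
    (hord : ∀ z : ℕ, 0 < z → Nat.card G ∣ p ^ z - 1 → m ∣ z)
    (hk : k ≤ m - 1) (hpk : Nat.card G ∣ p ^ k + 1)
    (hr : r ∣ m) (hr1 : 1 ≤ r) (hrm : r < m)
    (hdiv : (p ^ m - 1) / (p ^ r - 1) ∣ p ^ k + 1) :
    1 ≤ k ∧ m = 2 * k ∧ r = k ∧ (p ^ m - 1) / (p ^ r - 1) = p ^ k + 1 := by
  have hp2 : 2 ≤ p := hp.two_le
  -- Step 1: k ≥ 1
  have hk1 : 1 ≤ k := by
    by_contra h
    push_neg at h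
    interval_cases k
    simp at hpk
    -- hpk : Nat.card G ∣ 2
    have hcard : Nat.card G ∣ p - 1 := by
      rcases hp.eq_two_or_odd' with h2 | hodd
      · subst h2
        have hodd' : ¬ 2 ∣ 2 ^ m - 1 := by
          have h1 : 2 ∣ 2 ^ m := dvd_pow_self 2 (by omega)
          obtain ⟨t, ht⟩ := h1
          have h2m : 1 ≤ 2 ^ m := Nat.one_le_pow _ _ (by omega)
          omega
        rcases (Nat.dvd_prime Nat.prime_two).mp hpk with h1 | h1
        · simp [h1]
        · exact absurd (h1 ▸ hdvd) hodd'
      · obtain ⟨t, ht⟩ := hodd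
        exact hpk.trans ⟨t, by omega⟩
    have hdm : m ∣ 1 := hord 1 one_pos (by simpa using hcard)
    have : m = 1 := Nat.dvd_one.mp hdm
    omega
  -- |G| ∣ p^(2k) - 1
  have hpow : Nat.card G ∣ p ^ (2 * k) - 1 := by
    obtain ⟨b, hb⟩ : ∃ b, p ^ k = b + 1 :=
      ⟨p ^ k - 1, by have := Nat.one_le_pow k p (by omega); omega⟩
    have heq : p ^ (2 * k) - 1 = (b + 2) * b := by
      have : p ^ (2 * k) = (p ^ k) ^ 2 := by rw [pow_mul, sq]; ring
      rw [this, hb]; ring_nf; omega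
    rw [heq]
    exact dvd_mul_of_dvd_left (by rw [hb] at hpk; simpa using hpk) b
  have hm2k : m ∣ 2 * k := hord (2 * k) (by omega) hpow
  have hmeq : m = 2 * k := by
    obtain ⟨c, hc⟩ := hm2k
    have hc0 : c ≠ 0 := by rintro rfl; omega
    have hkm : k < m := by omega
    have : c = 1 := by
      by_contra hne
      have h2c : 2 ≤ c := by omega
      have : m * 2 ≤ m * c := Nat.mul_le_mul_left m h2c
      omega
    subst this
    omega
  subst hmeq
  -- Step 3: r = k
  have hQ : (p ^ (2 * k) - 1) / (p ^ r - 1) * (p ^ r - 1) = p ^ (2 * k) - 1 := by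
    apply Nat.div_mul_cancel
    obtain ⟨c, hc⟩ := hr
    have := Nat.sub_dvd_pow_sub_pow (p ^ r) 1 c
    simpa [← pow_mul, ← hc] using this
  have hQle : (p ^ (2 * k) - 1) / (p ^ r - 1) ≤ p ^ k + 1 :=
    Nat.le_of_dvd (by positivity) hdiv
  have hrk : r = k := by
    have hrge : k ≤ r := by
      by_contra h
      push_neg at h
      -- r ≤ k - 1, show (p^k+1)*(p^r-1) < p^(2k)-1
      have h1 : p ^ (2 * k) - 1 ≤ (p ^ k + 1) * (p ^ r - 1) := by
        calc p ^ (2 * k) - 1 = (p ^ (2 * k) - 1) / (p ^ r - 1) * (p ^ r - 1) := hQ.symm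
          _ ≤ (p ^ k + 1) * (p ^ r - 1) := Nat.mul_le_mul_right _ hQle
      have hkr : p ^ (k + r) * 2 ≤ p ^ (2 * k) := by
        calc p ^ (k + r) * 2 ≤ p ^ (k + r) * p := by
              apply Nat.mul_le_mul_left; omega
          _ = p ^ (k + r + 1) := by rw [pow_succ]
          _ ≤ p ^ (2 * k) := Nat.pow_le_pow_right (by omega) (by omega)
      have hr2 : p ^ r * 2 ≤ p ^ k := by
        calc p ^ r * 2 ≤ p ^ r * p := by apply Nat.mul_le_mul_left; omega
          _ = p ^ (r + 1) := by rw [pow_succ]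
          _ ≤ p ^ k := Nat.pow_le_pow_right (by omega) (by omega)
      have hexp : (p ^ k + 1) * (p ^ r - 1) + p ^ k + 1 = p ^ (k + r) + p ^ r := by
        have h2 : 1 ≤ p ^ r := Nat.one_le_pow _ _ (by omega)
        have h3 : p ^ (k + r) = p ^ k * p ^ r := by rw [pow_add]
        nlinarith [Nat.sub_add_cancel h2]
      have hpk' : 1 ≤ p ^ k := Nat.one_le_pow _ _ (by omega)
      have hp2k : 1 ≤ p ^ (2 * k) := Nat.one_le_pow _ _ (by omega)
      omega
    obtain ⟨c, hc⟩ := hr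
    have hc2 : c ≤ 2 := by
      by_contra hne
      push_neg at hne
      have h3 : r * 3 ≤ 2 * k := by
        rw [hc]; exact Nat.mul_le_mul_left r (by omega)
      omega
    interval_cases c <;> omega
  refine ⟨hk1, rfl, hrk, ?_⟩
  rw [hrk]
  have h1 : 1 ≤ p ^ k := Nat.one_le_pow _ _ (by omega)
  have heq : p ^ (2 * k) - 1 = (p ^ k - 1) * (p ^ k + 1) := by
    have h2 : p ^ (2 * k) = p ^ k * p ^ k := by rw [two_mul, pow_add]
    obtain ⟨b, hb⟩ : ∃ b, p ^ k = b + 1 := ⟨p ^ k - 1, by omega⟩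
    rw [h2, hb]
    have h3 : (b + 1) * (b + 1) = b * (b + 1 + 1) + 1 := by ring
    have h4 : b + 1 - 1 = b := rfl
    rw [h3, h4]
    simp
  rw [heq]
  have hlt : 1 < p ^ k := Nat.one_lt_pow (by omega) (by omega)
  exact Nat.mul_div_cancel_left _ (by omega)
end

section
/- Let V be a finite vector space of order p^n over GF(p), let H ≤ Γ(V) be a group of semilinear maps on V, and let T_0 ≤ H be a subgroup whose order t is a prime that is a primitive prime divisor of p^n - 1 (i.e., t divides p^n - 1 but not p^j - 1 for 1 ≤ j < n). Then C_H(T_0) = H ∩ Γ_0(V) = Fit(H), the Fitting subgroup of H. -/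
/-- The multiplicative group structure on `AddAut A` (composition), as in the older Mathlib. -/
instance AddAut.groupCompOld (A : Type*) [Add A] : Group (AddAut A) where
  mul g h := AddEquiv.trans h g
  one := AddEquiv.refl _
  inv := AddEquiv.symm
  mul_assoc _ _ _ := rfl
  one_mul _ := rfl
  mul_one _ := rfl
  inv_mul_cancel := AddEquiv.self_trans_symm

@[simp]
theorem AddAut.mul_apply_old {A : Type*} [Add A] (e₁ e₂ : AddAut A) (m : A) :
    (e₁ * e₂) m = e₁ (e₂ m) :=
  rfl

@[simp]
theorem AddAut.one_apply_old {A : Type*} [Add A] (m : A) : (1 : AddAut A) m = m :=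
  rfl

@[simp]
theorem AddAut.inv_apply_old {A : Type*} [Add A] (e : AddAut A) (m : A) : e⁻¹ m = e.symm m :=
  rfl

/-- The subgroup of `AddAut F` given by multiplications by nonzero field elements,
i.e. `Γ₀(F)`. -/
def Gamma0 (F : Type) [Field F] : Subgroup (AddAut F) where
  carrier := {f | ∃ a : Fˣ, ∀ x, f x = a * x}
  one_mem' := ⟨1, by simp⟩
  mul_mem' := by
    rintro f g ⟨a, ha⟩ ⟨b, hb⟩
    exact ⟨a * b, fun x => by simp [AddAut.mul_apply_old, ha, hb, mul_assoc]⟩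
  inv_mem' := by
    rintro f ⟨a, ha⟩
    refine ⟨a⁻¹, fun x => ?_⟩
    have h1 : f (f⁻¹ x) = x := by
      have : (f * f⁻¹) x = x := by rw [mul_inv_cancel]; rfl
      simpa [AddAut.mul_apply_old] using this
    have h2 := ha (f⁻¹ x)
    rw [h1] at h2
    have h3 := congrArg (fun y => ((a⁻¹ : Fˣ) : F) * y) h2
    simp only [Units.inv_mul_cancel_left] at h3
    exact h3.symm
  
/-- The semilinear group `Γ(F)` of maps `x ↦ a * σ x` for `a` a nonzero element and
`σ` a field automorphism, as a subgroup of `AddAut F`. -/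
def Gammal (F : Type) [Field F] : Subgroup (AddAut F) where
  carrier := {f | ∃ (a : Fˣ) (σ : F ≃+* F), ∀ x, f x = a * σ x}
  one_mem' := ⟨1, RingEquiv.refl F, by simp⟩
  mul_mem' := by
    rintro f g ⟨a, σ, ha⟩ ⟨b, τ, hb⟩
    refine ⟨a * Units.map σ.toMonoidHom b, τ.trans σ, fun x => ?_⟩
    simp [AddAut.mul_apply_old, ha, hb, map_mul, mul_assoc]
  inv_mem' := by
    rintro f ⟨a, σ, ha⟩
    refine ⟨Units.map σ.symm.toMonoidHom a⁻¹, σ.symm, fun x => ?_⟩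
    have h1 : f (f⁻¹ x) = x := by
      have : (f * f⁻¹) x = x := by rw [mul_inv_cancel]; rfl
      simpa [AddAut.mul_apply_old] using this
    have h2 := ha (f⁻¹ x)
    rw [h1] at h2
    have h3 : σ (f⁻¹ x) = (a⁻¹ : Fˣ) * x := by
      have h4 := congrArg (fun y => ((a⁻¹ : Fˣ) : F) * y) h2
      simp only [Units.inv_mul_cancel_left] at h4
      exact h4.symm
    have h4 : (f⁻¹ : AddAut F) x = σ.symm ((a⁻¹ : Fˣ) * x) := by
      rw [← h3]; simp
    rw [h4]
    simp [map_mul]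

/-- The Fitting subgroup: the join of all nilpotent normal subgroups. -/
def fittingSubgroup (G : Type) [Group G] : Subgroup G :=
  ⨆ (N : Subgroup G) (_ : N.Normal) (_ : Group.IsNilpotent N), N

/-!
Every element of `Γ(V)` has the form `x ↦ b * σ x`. Since `t` is a primitive prime divisor of
`p ^ n - 1`, Fermat gives `n < t`, so `t` is prime to `n = |Gal(GF(p^n)/GF(p))|` and `T₀` lies in
`Γ₀(V)`. A generator `s` of `T₀` is multiplication by an element `a` of order `t`, and `a` lies in
no proper subfield. A semilinear map commuting with `s` has `σ a = a`, hence `σ = 1`: this gives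
`C_H(T₀) = H ∩ Γ₀(V)`. The abelian normal subgroup `H ∩ Γ₀(V)` lies in `Fit(H)`; conversely, if
`x ∉ Γ₀(V)` lies in a nilpotent normal subgroup of `H`, the iterated commutators
`⁅⋯⁅s, x⁆⋯, x⁆` are field multiplications of order `t`, never `1`, contradicting nilpotency.
-/
open scoped commutatorElement

section Nilpotent

variable {G : Type} [Group G]

theorem Group.exists_iterate_commutator_eq_one [Group.IsNilpotent G] (g c : G) :
    ∃ k, (fun x => ⁅x, g⁆)^[k] c = 1 := by
  obtain ⟨k, hk⟩ := Subgroup.nilpotent_iff_lowerCentralSeries.mp ‹Group.IsNilpotent G›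
  have hmem : ∀ j, (fun x => ⁅x, g⁆)^[j] c ∈ (⊤ : Subgroup G).lowerCentralSeries j := by
    intro j
    induction j with
    | zero => exact Subgroup.mem_top _
    | succ j ih =>
      rw [Function.iterate_succ_apply', Subgroup.lowerCentralSeries_succ]
      exact Subgroup.commutator_mem_commutator ih (Subgroup.mem_top g)
  exact ⟨k, Subgroup.mem_bot.mp (hk ▸ hmem k)⟩

theorem Subgroup.exists_iterate_commutator_eq_one {N : Subgroup G} [N.Normal]
    [Group.IsNilpotent N] {g : G} (hg : g ∈ N) (c : G) :
    ∃ k, (fun x => ⁅x, g⁆)^[k] c = 1 := by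
  have hc : ⁅c, g⁆ ∈ N := by
    rw [commutatorElement_def]
    exact N.mul_mem (Normal.conj_mem ‹_› g hg c) (N.inv_mem hg)
  obtain ⟨k, hk⟩ := Group.exists_iterate_commutator_eq_one (⟨g, hg⟩ : N) ⟨_, hc⟩
  have hcoe : Function.Semiconj ((↑) : N → G) (fun x => ⁅x, ⟨g, hg⟩⁆) (fun x => ⁅x, g⁆) :=
    fun _ => rfl
  refine ⟨k + 1, ?_⟩
  rw [Function.iterate_succ_apply, ← (hcoe.iterate_right k) ⟨_, hc⟩, hk, OneMemClass.coe_one]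

theorem le_fittingSubgroup_of_commute (N : Subgroup G) [N.Normal]
    (hN : ∀ x ∈ N, ∀ y ∈ N, Commute x y) : N ≤ fittingSubgroup G := by
  let _ : CommGroup N := { mul_comm := fun a b => Subtype.ext (hN _ a.2 _ b.2) }
  exact le_iSup_of_le N (le_iSup_of_le ‹_› (le_iSup_of_le CommGroup.isNilpotent le_rfl))

end Nilpotent

theorem Nat.lt_of_primitive_prime_divisor {p n t : ℕ} (hp : 0 < p) (ht : t.Prime)
    (htd : t ∣ p ^ n - 1) (hppd : ∀ j, 1 ≤ j → j < n → ¬ t ∣ p ^ j - 1) : n < t := by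
  by_contra! htn
  have ht2 := ht.two_le
  have hpt : p.Coprime t := by
    refine Nat.coprime_comm.mp (ht.coprime_iff_not_dvd.mpr fun htp => ht.one_lt.ne' ?_)
    have := Nat.dvd_sub (dvd_pow htp (by omega : n ≠ 0)) htd
    rwa [Nat.sub_sub_self (Nat.one_le_pow _ _ hp), Nat.dvd_one] at this
  have hfermat := Nat.ModEq.pow_totient hpt
  rw [Nat.totient_prime ht] at hfermat
  exact hppd (t - 1) (by omega) (by omega)
    ((Nat.modEq_iff_dvd' (Nat.one_le_pow _ _ hp)).mp hfermat.symm)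

/-- `K` has `p ^ d` elements with `d ≤ n` and `t ∣ p ^ d - 1`, which forces `d = n`. -/
theorem Subfield.eq_top_of_orderOf_mem {F : Type*} [Field F] [Finite F] {p n t : ℕ}
    (hp : p.Prime) (hF : Nat.card F = p ^ n) (hppd : ∀ j, 1 ≤ j → j < n → ¬ t ∣ p ^ j - 1)
    (K : Subfield F) {x : Fˣ} (hxK : (x : F) ∈ K) (hx : orderOf x = t) : K = ⊤ := by
  obtain ⟨d, hdn, hKd⟩ := (Nat.dvd_prime_pow hp).mp
    (hF ▸ AddSubgroup.card_addSubgroup_dvd_card K.toAddSubgroup)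
  change Nat.card K = p ^ d at hKd
  have hd : 1 ≤ d := Nat.one_le_iff_ne_zero.mpr fun hd0 => by
    simpa [hKd, hd0] using Finite.one_lt_card (α := K)
  have htd : t ∣ p ^ d - 1 := by
    let u : Kˣ := Units.mk0 ⟨x, hxK⟩ fun h => x.ne_zero (congrArg Subtype.val h)
    have hu : Units.map K.subtype.toMonoidHom u = x := Units.ext rfl
    have hinj : Function.Injective (Units.map K.subtype.toMonoidHom) :=
      Units.map_injective Subtype.val_injective
    rw [← hx, ← hu, orderOf_injective _ hinj, ← hKd, ← Nat.card_units]
    exact orderOf_dvd_natCard u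
  obtain rfl : d = n := by
    by_contra h
    exact hppd d hd (lt_of_le_of_ne hdn h) htd
  have htop : K.toAddSubgroup = ⊤ :=
    (AddSubgroup.card_eq_iff_eq_top _).mp (hKd.trans hF.symm)
  exact eq_top_iff.mpr fun y _ => (htop ▸ AddSubgroup.mem_top y : y ∈ K.toAddSubgroup)

theorem GaloisField.ringEquiv_pow_eq_one {p n : ℕ} [Fact p.Prime]
    (σ : GaloisField p n ≃+* GaloisField p n) : σ ^ n = 1 := by
  rcases eq_or_ne n 0 with rfl | hn
  · exact pow_zero σ
  let σ' : GaloisField p n ≃ₐ[ZMod p] GaloisField p n := AlgEquiv.ofRingEquiv (f := σ)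
    fun x => RingHom.congr_fun (Subsingleton.elim
      ((σ : GaloisField p n →+* GaloisField p n).comp (algebraMap (ZMod p) _))
      (algebraMap (ZMod p) (GaloisField p n))) x
  have hσ' : σ' ^ n = 1 := by
    have h := pow_card_eq_one' (x := σ')
    rwa [IsGalois.card_aut_eq_finrank, GaloisField.finrank p hn] at h
  have hσσ' : MulSemiringAction.toRingAut _ _ σ' = σ := RingEquiv.ext fun _ => rfl
  rw [← hσσ', ← map_pow, hσ', map_one]

section Semilinear

variable {E : Type} [Field E]

def mulLeftAddAut (E : Type) [Field E] : Eˣ →* AddAut E where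
  toFun a := DistribMulAction.toAddEquiv E a
  map_one' := AddEquiv.ext fun x => one_smul Eˣ x
  map_mul' a b := AddEquiv.ext fun x => mul_smul a b x

@[simp]
theorem mulLeftAddAut_apply (a : Eˣ) (x : E) : mulLeftAddAut E a x = a * x := rfl

theorem mulLeftAddAut_injective : Function.Injective (mulLeftAddAut E) := fun a b h =>
  Units.ext (by simpa using congrArg (· (1 : E)) h)

theorem Gamma0_eq_range : Gamma0 E = (mulLeftAddAut E).range := by
  ext f
  exact ⟨fun ⟨a, ha⟩ => ⟨a, AddEquiv.ext fun x => (ha x).symm⟩,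
    fun ⟨a, ha⟩ => ⟨a, fun x => ha ▸ rfl⟩⟩

theorem Gamma0.commute {f g : AddAut E} (hf : f ∈ Gamma0 E) (hg : g ∈ Gamma0 E) :
    Commute f g := by
  rw [Gamma0_eq_range] at hf hg
  obtain ⟨a, rfl⟩ := hf
  obtain ⟨b, rfl⟩ := hg
  exact (Commute.all a b).map _

theorem apply_mul_of_semilinear {f : AddAut E} {b : Eˣ} {σ : E ≃+* E}
    (hf : ∀ x, f x = b * σ x) (a x : E) : f (a * x) = σ a * f x := by
  rw [hf, hf, map_mul, mul_left_comm]

theorem pow_apply_mul_of_semilinear {f : AddAut E} {b : Eˣ} {σ : E ≃+* E}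
    (hf : ∀ x, f x = b * σ x) (k : ℕ) (a x : E) : (f ^ k) (a * x) = (σ ^ k) a * (f ^ k) x := by
  induction k generalizing a x with
  | zero => rfl
  | succ k ih =>
    rw [pow_succ, pow_succ, AddAut.mul_apply_old, apply_mul_of_semilinear hf, ih]
    rfl

theorem Gamma0.conj_mem {f g : AddAut E} (hf : f ∈ Gammal E) (hg : g ∈ Gamma0 E) :
    f * g * f⁻¹ ∈ Gamma0 E := by
  obtain ⟨b, σ, hfσ⟩ := hf
  obtain ⟨a, rfl⟩ := Gamma0_eq_range (E := E) ▸ hg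
  refine ⟨Units.map σ.toMonoidHom a, fun x => ?_⟩
  rw [AddAut.mul_apply_old, AddAut.mul_apply_old, mulLeftAddAut_apply,
    apply_mul_of_semilinear hfσ, AddAut.inv_apply_old, AddEquiv.apply_symm_apply]
  rfl

theorem mem_Gamma0_of_pow_eq_one {f : AddAut E} {k : ℕ} (hf : f ∈ Gammal E) (hfk : f ^ k = 1)
    (hk : ∀ σ : E ≃+* E, σ ^ k = 1 → σ = 1) : f ∈ Gamma0 E := by
  obtain ⟨b, σ, hfσ⟩ := hf
  have hσk : σ ^ k = 1 := RingEquiv.ext fun a => by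
    simpa [hfk] using (pow_apply_mul_of_semilinear hfσ k a 1).symm
  refine ⟨b, fun x => ?_⟩
  rw [hfσ, hk σ hσk]
  rfl

theorem mem_Gamma0_of_commute {t : ℕ}
    (hgen : ∀ a : Eˣ, orderOf a = t → Subfield.closure {(a : E)} = ⊤) {f s : AddAut E}
    (hf : f ∈ Gammal E) (hs : s ∈ Gamma0 E) (hst : orderOf s = t) (hcomm : Commute f s) :
    f ∈ Gamma0 E := by
  obtain ⟨b, σ, hfσ⟩ := hf
  obtain ⟨a, rfl⟩ := Gamma0_eq_range (E := E) ▸ hs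
  rw [orderOf_injective _ mulLeftAddAut_injective] at hst
  have hσa : σ a = a := by
    have h := congrArg (· (1 : E)) hcomm.eq
    simp only [AddAut.mul_apply_old, mulLeftAddAut_apply, apply_mul_of_semilinear hfσ] at h
    have hf1 : f 1 ≠ 0 := fun h0 => one_ne_zero (f.injective (h0.trans (map_zero f).symm))
    exact mul_right_cancel₀ hf1 h
  have hσ : σ = RingEquiv.refl E := RingEquiv.toRingHom_injective <|
    RingHom.eq_of_eqOn_of_field_closure_eq_top (hgen a hst) (by simpa using hσa)
  refine ⟨b, fun x => ?_⟩
  rw [hfσ, hσ]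
  rfl

theorem Gamma0.commutatorElement_mem_and_orderOf_eq {t : ℕ} [Fact t.Prime]
    (hgen : ∀ a : Eˣ, orderOf a = t → Subfield.closure {(a : E)} = ⊤) {f y : AddAut E}
    (hf : f ∈ Gammal E) (hf0 : f ∉ Gamma0 E) (hy : y ∈ Gamma0 E) (hyt : orderOf y = t) :
    ⁅y, f⁆ ∈ Gamma0 E ∧ orderOf ⁅y, f⁆ = t := by
  have hconj : f * y⁻¹ * f⁻¹ ∈ Gamma0 E := Gamma0.conj_mem hf (inv_mem hy)
  have hyf : ⁅y, f⁆ = y * (f * y⁻¹ * f⁻¹) := by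
    rw [commutatorElement_def]
    group
  have hyt1 : y ^ t = 1 := hyt ▸ pow_orderOf_eq_one y
  refine ⟨hyf ▸ mul_mem hy hconj, orderOf_eq_prime ?_ ?_⟩
  · rw [hyf, (Gamma0.commute hy hconj).mul_pow, conj_pow, inv_pow, hyt1]
    group
  · exact fun h => hf0 (mem_Gamma0_of_commute hgen hf hy hyt
      (commutatorElement_eq_one_iff_commute.mp h).symm)

theorem mem_Gamma0_of_mem_of_isNilpotent {t : ℕ} [Fact t.Prime]
    (hgen : ∀ a : Eˣ, orderOf a = t → Subfield.closure {(a : E)} = ⊤)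
    {H : Subgroup (AddAut E)} (hH : H ≤ Gammal E) {s : H} (hs : (s : AddAut E) ∈ Gamma0 E)
    (hst : orderOf (s : AddAut E) = t) (N : Subgroup H) [N.Normal] [Group.IsNilpotent N]
    {x : H} (hx : x ∈ N) : (x : AddAut E) ∈ Gamma0 E := by
  by_contra hx0
  obtain ⟨k, hk⟩ := Subgroup.exists_iterate_commutator_eq_one hx s
  have hiter := Function.Iterate.rec
    (motive := fun y : H => (y : AddAut E) ∈ Gamma0 E ∧ orderOf (y : AddAut E) = t)
    (f := fun y => ⁅y, x⁆) ⟨hs, hst⟩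
    (fun y hy => Gamma0.commutatorElement_mem_and_orderOf_eq hgen (hH x.2) hx0 hy.1 hy.2) k
  rw [hk, OneMemClass.coe_one, orderOf_one] at hiter
  exact (Fact.out : t.Prime).one_lt.ne hiter.2

theorem inf_centralizer_eq_inf_Gamma0 {t : ℕ}
    (hgen : ∀ a : Eˣ, orderOf a = t → Subfield.closure {(a : E)} = ⊤)
    {H T : Subgroup (AddAut E)} (hH : H ≤ Gammal E) (hT : T ≤ Gamma0 E) {s : AddAut E}
    (hsT : s ∈ T) (hst : orderOf s = t) :
    H ⊓ Subgroup.centralizer (T : Set (AddAut E)) = H ⊓ Gamma0 E := by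
  refine le_antisymm ?_ ?_
  · rintro f ⟨hfH, hfc⟩
    have hcomm : Commute s f := Subgroup.mem_centralizer_iff.mp hfc s hsT
    exact ⟨hfH, mem_Gamma0_of_commute hgen (hH hfH) (hT hsT) hst hcomm.symm⟩
  · rintro f ⟨hfH, hf0⟩
    exact ⟨hfH, Subgroup.mem_centralizer_iff.mpr fun g hg => Gamma0.commute (hT hg) hf0⟩

theorem map_fittingSubgroup_eq_inf_Gamma0 {t : ℕ} [Fact t.Prime]
    (hgen : ∀ a : Eˣ, orderOf a = t → Subfield.closure {(a : E)} = ⊤)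
    {H : Subgroup (AddAut E)} (hH : H ≤ Gammal E) {s : AddAut E} (hsH : s ∈ H)
    (hs : s ∈ Gamma0 E) (hst : orderOf s = t) :
    (fittingSubgroup H).map H.subtype = H ⊓ Gamma0 E := by
  refine le_antisymm ?_ ?_
  · rw [Subgroup.map_le_iff_le_comap]
    refine iSup_le fun N => iSup_le fun _ => iSup_le fun _ x hx => ⟨x.2, ?_⟩
    exact mem_Gamma0_of_mem_of_isNilpotent hgen hH (s := ⟨s, hsH⟩) hs hst N hx
  · rintro f ⟨hfH, hf0⟩
    have : ((Gamma0 E).comap H.subtype).Normal := ⟨fun g hg h => Gamma0.conj_mem (hH h.2) hg⟩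
    refine ⟨⟨f, hfH⟩, le_fittingSubgroup_of_commute ((Gamma0 E).comap H.subtype)
      (fun x hx y hy => ?_) hf0, rfl⟩
    exact Subtype.ext (Gamma0.commute hx hy)

end Semilinear

theorem le_Gamma0_of_coprime_card {p n : ℕ} [Fact p.Prime]
    {T : Subgroup (AddAut (GaloisField p n))} (hT : T ≤ Gammal (GaloisField p n))
    (hcop : (Nat.card T).Coprime n) : T ≤ Gamma0 (GaloisField p n) := by
  intro f hf
  have hfk : f ^ Nat.card T = 1 := congrArg Subtype.val (pow_card_eq_one' (x := (⟨f, hf⟩ : T)))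
  refine mem_Gamma0_of_pow_eq_one (hT hf) hfk fun σ hσ => ?_
  have h := pow_gcd_eq_one.mpr ⟨hσ, GaloisField.ringEquiv_pow_eq_one σ⟩
  rwa [hcop.gcd_eq_one, pow_one] at h

/-- Lemma 3.7 (primitive prime divisors and semilinear groups). -/
theorem stmt_10 (p n t : ℕ) [Fact p.Prime] (hn : 0 < n)
    (H T0 : Subgroup (AddAut (GaloisField p n)))
    (hH : H ≤ Gammal (GaloisField p n)) (hT : T0 ≤ H)
    (ht : t.Prime) (hcard : Nat.card T0 = t)
    (htd : t ∣ p ^ n - 1) (hppd : ∀ j, 1 ≤ j → j < n → ¬ t ∣ p ^ j - 1) :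
    H ⊓ Subgroup.centralizer (T0 : Set (AddAut (GaloisField p n)))
        = H ⊓ Gamma0 (GaloisField p n) ∧
    H ⊓ Subgroup.centralizer (T0 : Set (AddAut (GaloisField p n)))
        = Subgroup.map H.subtype (fittingSubgroup H) := by
  have : Fact t.Prime := ⟨ht⟩
  have hgen (a : (GaloisField p n)ˣ) (ha : orderOf a = t) :
      Subfield.closure {(a : GaloisField p n)} = ⊤ :=
    Subfield.eq_top_of_orderOf_mem Fact.out (GaloisField.card p n hn.ne') hppd _
      (Subfield.subset_closure rfl) ha
  have htn : n < t := Nat.lt_of_primitive_prime_divisor (Fact.out : p.Prime).pos ht htd hppd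
  have hT0 : T0 ≤ Gamma0 (GaloisField p n) :=
    le_Gamma0_of_coprime_card (hT.trans hH) (hcard ▸ Nat.coprime_of_lt_prime hn.ne' htn ht)
  obtain ⟨⟨s, hsT⟩, hst⟩ := exists_prime_orderOf_dvd_card' t hcard.symm.dvd
  rw [Subgroup.orderOf_mk] at hst
  have hcent := inf_centralizer_eq_inf_Gamma0 hgen hH hT0 hsT hst
  exact ⟨hcent, hcent.trans (map_fittingSubgroup_eq_inf_Gamma0 hgen hH (hT hsT) (hT0 hsT) hst).symm⟩
end

section
/- Let G be a finite group, p a prime, and P a normal p-subgroup of G. If G/C_G(P) is a p-group, then P is contained in the hypercenter of G (the last term of the upper central series of G). -/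
/-!
If `P ≠ 1`, the `p`-group `G ⧸ C_G(P)` acts on `P` by conjugation, and its fixed points are
`P ∩ Z(G)`. As `p` divides `|P|` and `1` is fixed, the fixed points number a nonzero multiple
of `p`, so `P ∩ Z(G) ≠ 1`. The hypotheses pass to the image of `P` in `G ⧸ Z(G)`, which is
therefore smaller; by induction it lies in some `Z_n(G ⧸ Z(G))`, whose preimage is `Z_{n+1}(G)`.
-/

namespace Subgroup

variable {G : Type*} [Group G]

theorem card_map_lt_of_inf_ker_ne_bot {G' : Type*} [Group G'] {H : Subgroup G} [Finite H]
    {f : G →* G'} (h : H ⊓ f.ker ≠ ⊥) : Nat.card (H.map f) < Nat.card H := by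
  set φ := f.subgroupMap H
  have hker : 1 < Nat.card φ.ker := by
    rwa [one_lt_card_iff_ne_bot, ker_subgroupMap, Ne, subgroupOf_eq_bot, disjoint_iff, inf_comm]
  calc Nat.card (H.map f) = φ.ker.index := by
        rw [index_ker, MonoidHom.range_eq_top_of_surjective _ (f.subgroupMap_surjective H),
          card_top]
    _ < Nat.card φ.ker * φ.ker.index :=
        lt_mul_left (Nat.pos_of_ne_zero index_ne_zero_of_finite) hker
    _ = Nat.card H := card_mul_index _

variable (P : Subgroup G) [P.Normal]

theorem centralizer_le_ker_conjNormal :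
    centralizer (P : Set G) ≤ (MulAut.conjNormal : G →* MulAut P).ker := by
  intro c hc
  ext x
  simp [MulAut.conjNormal_apply, ← mem_centralizer_iff.mp hc x x.2]

noncomputable def quotientCentralizerConjNormal : G ⧸ centralizer (P : Set G) →* MulAut P :=
  QuotientGroup.lift _ MulAut.conjNormal (centralizer_le_ker_conjNormal P)

end Subgroup

namespace IsPGroup

open Subgroup

variable {G : Type*} [Group G] {p : ℕ}

theorem quotient_centralizer_map {G' : Type*} [Group G'] {f : G →* G'}
    (hf : Function.Surjective f) {P : Subgroup G}
    [(centralizer (P : Set G)).Normal] [(centralizer (P.map f : Set G')).Normal]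
    (hq : IsPGroup p (G ⧸ centralizer (P : Set G))) :
    IsPGroup p (G' ⧸ centralizer (P.map f : Set G')) := by
  have hle : centralizer (P : Set G) ≤ (centralizer (P.map f : Set G')).comap f := by
    rw [← map_le_iff_le_comap, coe_map]
    exact map_centralizer_le_centralizer_image _ f
  exact hq.of_surjective (QuotientGroup.map _ _ f hle)
    (QuotientGroup.map_surjective_of_surjective _ _ f (QuotientGroup.mk_surjective.comp hf) hle)

variable [Finite G] [Fact p.Prime] {P : Subgroup G} [P.Normal]

theorem inf_center_ne_bot_of_quotient_centralizer (hpP : IsPGroup p P)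
    (hq : IsPGroup p (G ⧸ centralizer (P : Set G))) (hP : P ≠ ⊥) : P ⊓ center G ≠ ⊥ := by
  let := MulAction.compHom P (quotientCentralizerConjNormal P)
  have hfix (x : P) :
      x ∈ MulAction.fixedPoints (G ⧸ centralizer (P : Set G)) P ↔ (x : G) ∈ center G := by
    rw [MulAction.mem_fixedPoints, QuotientGroup.mk_surjective.forall, mem_center_iff]
    refine forall_congr' fun g => ?_
    rw [Subtype.ext_iff]
    change g * x * g⁻¹ = x ↔ _
    rw [mul_inv_eq_iff_eq_mul]
  have hdvd : p ∣ Nat.card P :=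
    hpP.card_eq_or_dvd.resolve_left ((one_lt_card_iff_ne_bot P).mpr hP).ne'
  obtain ⟨x, hx, hx1⟩ :=
    hq.exists_fixed_point_of_prime_dvd_card_of_fixed_point P hdvd ((hfix 1).mpr (one_mem _))
  exact ne_bot_iff_exists_ne_one.mpr
    ⟨⟨x, x.2, (hfix x).mp hx⟩, fun h => hx1 (Subtype.ext (congrArg Subtype.val h).symm)⟩

theorem exists_le_upperCentralSeries_of_quotient_centralizer (hpP : IsPGroup p P)
    (hq : IsPGroup p (G ⧸ centralizer (P : Set G))) :
    ∃ n, P ≤ Subgroup.upperCentralSeries G n := by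
  induction hcard : Nat.card P using Nat.strong_induction_on generalizing G with
  | _ m ih =>
  rcases eq_or_ne P ⊥ with rfl | hP
  · exact ⟨0, bot_le⟩
  set π := QuotientGroup.mk' (center G)
  have : (P.map π).Normal := ‹P.Normal›.map π (QuotientGroup.mk'_surjective _)
  have hlt : Nat.card (P.map π) < m := hcard ▸ card_map_lt_of_inf_ker_ne_bot (by
    rw [QuotientGroup.ker_mk']
    exact hpP.inf_center_ne_bot_of_quotient_centralizer hq hP)
  obtain ⟨n, hn⟩ := ih _ hlt (hpP.map π)
    (hq.quotient_centralizer_map (QuotientGroup.mk'_surjective _)) rfl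
  refine ⟨n + 1, (le_comap_map π P).trans ?_⟩
  rw [← Subgroup.comap_upperCentralSeries_quotient_center]
  exact comap_mono hn

end IsPGroup

theorem stmt_11 (G : Type) [Group G] [Finite G] (p : ℕ) (hp : p.Prime)
    (P : Subgroup G) (hPn : P.Normal) (hpP : IsPGroup p P)
    [(Subgroup.centralizer (P : Set G)).Normal]
    (hq : IsPGroup p (G ⧸ Subgroup.centralizer (P : Set G))) :
    ∃ n : ℕ, P ≤ upperCentralSeries G n :=
  have : Fact p.Prime := ⟨hp⟩
  hpP.exists_le_upperCentralSeries_of_quotient_centralizer hq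
end

section
/- Let G be a finite solvable group with Fit(G) = M × Z where Z ≤ Z(G) and M is normal in G, and assume every irreducible character of Fit(G) extends to its inertia subgroup in G. Then the character degree graphs satisfy Δ(G) = Δ(G/Z); more precisely, cd(G) = cd(G/Z). -/
open scoped Classical


open CategoryTheory

/-- The set of degrees of irreducible complex characters of `G`. -/
def charDegrees (G : Type) [Group G] : Set ℕ :=
  {d | ∃ V : FDRep ℂ G, Simple V ∧ Module.finrank ℂ V = d}

/-- The character degree graph `Δ(G)`: vertices are primes dividing some irreducible
character degree, two primes being adjacent iff their product divides some degree. -/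
def degreeGraph (G : Type) [Group G] : SimpleGraph ℕ where
  Adj p q := p ≠ q ∧ p.Prime ∧ q.Prime ∧ ∃ d ∈ charDegrees G, p * q ∣ d
  symm := ⟨by
    rintro p q ⟨h1, h2, h3, d, hd, hdvd⟩
    exact ⟨h1.symm, h3, h2, d, hd, by rwa [mul_comm]⟩⟩
  loopless := ⟨by rintro p ⟨h, _⟩; exact h rfl⟩

/-- The vertex set `ρ(G)` of `Δ(G)`. -/
def vertexSet (G : Type) [Group G] : Set ℕ :=
  {p | p.Prime ∧ ∃ d ∈ charDegrees G, p ∣ d}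

/-- `Δ(G)` is connected with diameter exactly `3`. -/
def ConnectedDiamThree (G : Type) [Group G] : Prop :=
  (∀ u ∈ vertexSet G, ∀ v ∈ vertexSet G, (degreeGraph G).Reachable u v) ∧
  (∀ u ∈ vertexSet G, ∀ v ∈ vertexSet G, (degreeGraph G).dist u v ≤ 3) ∧
  (∃ u ∈ vertexSet G, ∃ v ∈ vertexSet G, (degreeGraph G).dist u v = 3)

/-- `Δ(G)` is disconnected. -/
def DisconnectedGraph (G : Type) [Group G] : Prop :=
  ∃ u ∈ vertexSet G, ∃ v ∈ vertexSet G, ¬ (degreeGraph G).Reachable u v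

open CategoryTheory

/-- The character of `W` viewed as a function on `G`, extended by zero off `F`. -/
noncomputable def classFun {G : Type} [Group G] (F : Subgroup G) (W : FDRep ℂ F) : G → ℂ :=
  fun g => if h : g ∈ F then W.character ⟨g, h⟩ else 0

/-- The inertia subgroup in `G` of a function `f : G → ℂ` under conjugation. -/
def inertia {G : Type} [Group G] (f : G → ℂ) : Subgroup G where
  carrier := {g | ∀ x, f (g * x * g⁻¹) = f x}
  one_mem' := by intro x; simp
  mul_mem' := by
    intro a b ha hb x
    have h : a * b * x * (a * b)⁻¹ = a * (b * x * b⁻¹) * a⁻¹ := by group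
    rw [h, ha, hb]
  inv_mem' := by
    intro a ha x
    have h1 := ha (a⁻¹ * x * a)
    have h2 : a * (a⁻¹ * x * a) * a⁻¹ = x := by group
    rw [h2] at h1
    rw [inv_inv]
    exact h1.symm

/-- Every irreducible character of `F` extends to its inertia subgroup in `G`. -/
def AllExtendToInertia (G : Type) [Group G] (F : Subgroup G) : Prop :=
  ∀ W : FDRep ℂ F, Simple W →
    ∃ U : FDRep ℂ (inertia (classFun F W)),
      ∀ (x : G) (hx : x ∈ inertia (classFun F W)) (hxF : x ∈ F),
        U.character ⟨x, hx⟩ = W.character ⟨x, hxF⟩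

/-!
Since `Z` is central, Schur's lemma makes `Z` act on an irreducible representation `V` of `G`
through a linear character `ω`. As `Fit(G) = M × Z`, the character `ω` extends, trivially on `M`,
to a linear character `ψ` of `Fit(G)`; because `M` is normal and `Z` central, `ψ` is invariant under
conjugation, so its inertia group is all of `G` and the hypothesis extends it to a linear
character `μ` of `G`. Twisting `V` by `μ⁻¹` keeps it irreducible of the same degree and makes `Z`
act trivially, so it is an irreducible representation of `G/Z`. Conversely, irreducible
representations of `G/Z` inflate to irreducible representations of `G`.
-/

theorem LinearMap.eq_algebraMap_trace_of_finrank_eq_one {k V : Type*} [Field k] [AddCommGroup V]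
    [Module k V] [FiniteDimensional k V] (h : Module.finrank k V = 1) (f : Module.End k V) :
    f = algebraMap k _ (LinearMap.trace k V f) := by
  have hEnd : Module.finrank k (Module.End k V) = 1 := by
    rw [Module.finrank_linearMap, h]
  obtain ⟨c, rfl⟩ := (Module.Free.bijective_algebraMap_of_finrank_eq_one hEnd).2 f
  simp [Module.algebraMap_end_eq_smul_id, h]

namespace Representation

variable {k G H V : Type*} [Field k] [AddCommGroup V] [Module k V]

section Monoid

variable [Monoid G] [Monoid H]

def subrepresentationOrderIsoOfInvariant (ρ : Representation k G V) (σ : Representation k H V)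
    (h : ∀ p : Submodule k V, (∀ g, ∀ v ∈ p, ρ g v ∈ p) ↔ ∀ x, ∀ v ∈ p, σ x v ∈ p) :
    Subrepresentation ρ ≃o Subrepresentation σ where
  toFun p := ⟨p.toSubmodule, (h _).1 fun g _ hv ↦ p.apply_mem_toSubmodule g hv⟩
  invFun p := ⟨p.toSubmodule, (h _).2 fun g _ hv ↦ p.apply_mem_toSubmodule g hv⟩
  left_inv _ := rfl
  right_inv _ := rfl
  map_rel_iff' := Iff.rfl

theorem isIrreducible_iff_of_invariant (ρ : Representation k G V) (σ : Representation k H V)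
    (h : ∀ p : Submodule k V, (∀ g, ∀ v ∈ p, ρ g v ∈ p) ↔ ∀ x, ∀ v ∈ p, σ x v ∈ p) :
    IsIrreducible ρ ↔ IsIrreducible σ :=
  (subrepresentationOrderIsoOfInvariant ρ σ h).isSimpleOrder_iff

theorem isIrreducible_comp_iff (ρ : Representation k H V) {φ : G →* H}
    (hφ : Function.Surjective φ) : IsIrreducible (ρ.comp φ) ↔ IsIrreducible ρ :=
  isIrreducible_iff_of_invariant _ _ fun _ ↦
    ⟨fun hp x v hv ↦ by obtain ⟨g, rfl⟩ := hφ x; exact hp g v hv, fun hp g ↦ hp (φ g)⟩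

theorem IsIrreducible.nontrivial (ρ : Representation k G V) [IsIrreducible ρ] : Nontrivial V := by
  by_contra h
  rw [not_nontrivial_iff_subsingleton] at h
  exact bot_ne_top (α := Subrepresentation ρ)
    (Subrepresentation.toSubmodule_injective (Subsingleton.elim _ _))

theorem isIrreducible_of_finrank_eq_one (ρ : Representation k G V)
    (h : Module.finrank k V = 1) : IsIrreducible ρ := by
  have : IsSimpleOrder (Submodule k V) :=
    (isSimpleModule_iff _ _).1 (isSimpleModule_iff_finrank_eq_one.2 h)
  exact
    { exists_pair_ne := ⟨⊥, ⊤, fun h ↦ bot_ne_top (congrArg Subrepresentation.toSubmodule h)⟩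
      eq_bot_or_eq_top := fun p ↦ (eq_bot_or_eq_top p.toSubmodule).imp
        (fun h ↦ Subrepresentation.toSubmodule_injective h)
        (fun h ↦ Subrepresentation.toSubmodule_injective h) }

def twist (ρ : Representation k G V) (χ : G →* kˣ) : Representation k G V where
  toFun g := (χ g : k) • ρ g
  map_one' := by simp
  map_mul' g h := by
    ext v
    simp [smul_smul, mul_comm]

theorem twist_apply (ρ : Representation k G V) (χ : G →* kˣ) (g : G) :
    twist ρ χ g = (χ g : k) • ρ g := rfl

theorem isIrreducible_twist_iff (ρ : Representation k G V) (χ : G →* kˣ) :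
    IsIrreducible (twist ρ χ) ↔ IsIrreducible ρ :=
  isIrreducible_iff_of_invariant _ _ fun p ↦ forall_congr' fun g ↦ forall₂_congr fun v _ ↦ by
    rw [twist_apply, LinearMap.smul_apply, ← Units.smul_def, p.smul_mem_iff']

noncomputable def ofLinearCharacter (χ : G →* kˣ) : Representation k G k :=
  (Algebra.ofId k (Module.End k k)).toMonoidHom.comp ((Units.coeHom k).comp χ)

theorem character_ofLinearCharacter (χ : G →* kˣ) (g : G) :
    (ofLinearCharacter χ).character g = χ g := by
  show LinearMap.trace k k (algebraMap k _ (χ g : k)) = χ g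
  simp [Module.algebraMap_end_eq_smul_id]

end Monoid

section Group

variable [Group G]

noncomputable def linearCharacter [FiniteDimensional k V] (ρ : Representation k G V)
    (h : Module.finrank k V = 1) : G →* kˣ :=
  MonoidHom.toHomUnits
    { toFun := ρ.character
      map_one' := by rw [char_one, h, Nat.cast_one]
      map_mul' := fun g g' ↦ by
        rw [character, character, character, map_mul,
          LinearMap.eq_algebraMap_trace_of_finrank_eq_one h (ρ g),
          LinearMap.eq_algebraMap_trace_of_finrank_eq_one h (ρ g'), ← map_mul]
        simp [Module.algebraMap_end_eq_smul_id, h] }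

theorem coe_linearCharacter [FiniteDimensional k V] (ρ : Representation k G V)
    (h : Module.finrank k V = 1) (g : G) : (linearCharacter ρ h g : k) = ρ.character g :=
  rfl

theorem exists_algebraMap_eq_of_mem_center [IsAlgClosed k] [FiniteDimensional k V]
    (ρ : Representation k G V) [IsIrreducible ρ] {z : G} (hz : z ∈ Subgroup.center G) :
    ∃ c : k, algebraMap k (Module.End k V) c = ρ z := by
  let f : IntertwiningMap ρ ρ := (ρ z).intertwiningMap_of_isIntertwiningMap ρ ρ fun g v ↦ by
    rw [← Module.End.mul_apply, ← map_mul, ← Subgroup.mem_center_iff.mp hz g, map_mul,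
      Module.End.mul_apply]
  obtain ⟨c, hc⟩ := IsIrreducible.algebraMap_intertwiningMap_bijective_of_isAlgClosed.2 f
  exact ⟨c, congrArg IntertwiningMap.toLinearMap hc⟩

theorem exists_centralCharacter [IsAlgClosed k] [FiniteDimensional k V]
    (ρ : Representation k G V) [IsIrreducible ρ] (Z : Subgroup G) (hZ : Z ≤ Subgroup.center G) :
    ∃ ω : Z →* kˣ, ∀ z : Z, algebraMap k (Module.End k V) (ω z) = ρ z := by
  choose c hc using fun z : Z ↦ exists_algebraMap_eq_of_mem_center ρ (hZ z.2)
  have := IsIrreducible.nontrivial ρ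
  have hinj := (algebraMap k (Module.End k V)).injective
  refine ⟨MonoidHom.toHomUnits
    { toFun := c
      map_one' := hinj (by rw [hc, map_one, OneMemClass.coe_one, map_one])
      map_mul' := fun z z' ↦ hinj (by rw [map_mul, hc, hc, hc, Subgroup.coe_mul, map_mul]) }, hc⟩

theorem isTrivial_twist_inv_comp_subtype (ρ : Representation k G V) {Z : Subgroup G}
    {μ : G →* kˣ} (hμ : ∀ z : Z, algebraMap k (Module.End k V) (μ z) = ρ z) :
    IsTrivial ((twist ρ μ⁻¹).comp Z.subtype) := ⟨fun z ↦ by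
  rw [MonoidHom.comp_apply, Subgroup.coe_subtype, twist_apply, ← hμ, MonoidHom.inv_apply,
    Algebra.smul_def, ← map_mul, Units.inv_mul, map_one, Module.End.one_eq_id]⟩

theorem isIrreducible_ofQuotient_iff (ρ : Representation k G V) (S : Subgroup G) [S.Normal]
    [IsTrivial (ρ.comp S.subtype)] : IsIrreducible (ρ.ofQuotient S) ↔ IsIrreducible ρ := by
  have h : (ρ.ofQuotient S).comp (QuotientGroup.mk' S) = ρ := by
    ext g v
    exact ofQuotient_coe_apply ρ S g v
  rw [← isIrreducible_comp_iff _ (QuotientGroup.mk'_surjective S), h]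

end Group

end Representation

namespace FDRep

variable {k G : Type} [Field k] [Monoid G]

noncomputable def subrepresentationι (V : FDRep k G) (p : Subrepresentation V.ρ) :
    FDRep.of p.toRepresentation ⟶ V where
  hom := FGModuleCat.ofHom p.toSubmodule.subtype
  comm _ := rfl

theorem eq_zero_of_isIso_zero {V W : FDRep k G} [IsIso (0 : W ⟶ V)] (v : V) : v = 0 := by
  have h : (𝟙 V : V ⟶ V) = 0 := by rw [← IsIso.inv_hom_id (0 : W ⟶ V), Limits.comp_zero]
  exact congrArg (fun f : V ⟶ V ↦ f.hom v) h

theorem isIrreducible_of_simple (V : FDRep k G) [Simple V] : Representation.IsIrreducible V.ρ := by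
  refine { exists_pair_ne := ⟨⊥, ⊤, fun h ↦ id_nonzero V ?_⟩, eq_bot_or_eq_top := fun p ↦ ?_ }
  · ext v
    have : v ∈ (⊥ : Subrepresentation V.ρ) := h ▸ trivial
    exact (Submodule.mem_bot k).1 this
  · have : Mono (subrepresentationι V p) :=
      ConcreteCategory.mono_of_injective _ Subtype.val_injective
    by_cases h0 : subrepresentationι V p = 0
    · left
      ext v
      exact ⟨fun hv ↦ (Submodule.mem_bot k).2 (congrArg (fun f ↦ f.hom ⟨v, hv⟩) h0),
        fun hv ↦ (Submodule.mem_bot k).1 hv ▸ p.toSubmodule.zero_mem⟩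
    · right
      have := isIso_of_mono_of_nonzero h0
      ext v
      obtain ⟨w, rfl⟩ := (ConcreteCategory.bijective_of_isIso (subrepresentationι V p)).2 v
      exact ⟨fun _ ↦ trivial, fun _ ↦ w.2⟩

theorem simple_of_isIrreducible (V : FDRep k G) [Representation.IsIrreducible V.ρ] :
    Simple V := by
  have := Representation.IsIrreducible.nontrivial V.ρ
  refine ⟨fun {Y} f _ ↦ ⟨fun _ h0 ↦ ?_, fun h0 ↦ ?_⟩⟩
  · subst h0
    obtain ⟨v, hv⟩ := exists_ne (0 : V)
    exact hv (eq_zero_of_isIso_zero (W := Y) v)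
  · let φ : Y →ₗ[k] V := ConcreteCategory.hom f.hom
    have hφ (g : G) (y : Y) : φ (Y.ρ g y) = V.ρ g (φ y) :=
      congrArg (fun h : Y.V ⟶ V.V ↦ h y) (f.comm g)
    let p : Subrepresentation V.ρ :=
      ⟨LinearMap.range φ, fun g _ ⟨y, hy⟩ ↦ ⟨Y.ρ g y, hy ▸ hφ g y⟩⟩
    rcases eq_bot_or_eq_top p with hp | hp
    · refine absurd (Action.hom_ext _ _ ?_) h0
      ext y
      exact (Submodule.mem_bot k).1
        (hp ▸ LinearMap.mem_range_self φ y : φ y ∈ (⊥ : Subrepresentation V.ρ))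
    · have : Epi f := ConcreteCategory.epi_of_surjective f fun v ↦
        show v ∈ p by rw [hp]; trivial
      exact isIso_of_mono_of_epi f

theorem simple_iff_isIrreducible (V : FDRep k G) :
    Simple V ↔ Representation.IsIrreducible V.ρ :=
  ⟨fun _ ↦ isIrreducible_of_simple V, fun _ ↦ simple_of_isIrreducible V⟩

end FDRep

namespace Subgroup

variable {G : Type*} [Group G]

theorem exists_sup_projection (M Z : Subgroup G) [M.Normal] (hinf : M ⊓ Z = ⊥) :
    ∃ π : ↥(M ⊔ Z) →* Z, ∀ m (hm : m ∈ M) z (hz : z ∈ Z),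
      π ⟨m * z, mul_mem_sup hm hz⟩ = ⟨z, hz⟩ := by
  let q := QuotientGroup.mk' (M.subgroupOf (M ⊔ Z))
  let i := q.comp (inclusion le_sup_right)
  have hq : ∀ m (hm : m ∈ M) z (hz : z ∈ Z), q ⟨m * z, mul_mem_sup hm hz⟩ = i ⟨z, hz⟩ := by
    intro m hm z hz
    refine (QuotientGroup.eq.2 ?_).symm
    simpa [mem_subgroupOf, mul_assoc] using Normal.conj_mem' inferInstance m hm z
  have hi : Function.Bijective i := by
    refine ⟨(injective_iff_map_eq_one i).2 fun z hz ↦ ?_, fun x ↦ ?_⟩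
    · have hzM : (z : G) ∈ M := by
        simpa [i, q, mem_subgroupOf] using (QuotientGroup.eq_one_iff _).1 hz
      have : (z : G) ∈ M ⊓ Z := ⟨hzM, z.2⟩
      rw [hinf, mem_bot] at this
      exact Subtype.ext this
    · obtain ⟨⟨x, hx⟩, rfl⟩ := QuotientGroup.mk_surjective x
      obtain ⟨m, hm, z, hz, rfl⟩ := mem_sup_of_normal_left.1 hx
      exact ⟨⟨z, hz⟩, (hq m hm z hz).symm⟩
  refine ⟨(MulEquiv.ofBijective i hi).symm.toMonoidHom.comp q, fun m hm z hz ↦ ?_⟩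
  rw [MonoidHom.comp_apply, hq m hm z hz]
  exact (MulEquiv.ofBijective i hi).symm_apply_apply _

theorem exists_conj_invariant_extension {A : Type*} [Monoid A] (M Z : Subgroup G) [M.Normal]
    (hZ : Z ≤ center G) (hinf : M ⊓ Z = ⊥) (ω : Z →* A) :
    ∃ ψ : ↥(M ⊔ Z) →* A, (∀ z (hz : z ∈ Z), ψ ⟨z, mem_sup_right hz⟩ = ω ⟨z, hz⟩) ∧
      ∀ g x (hx : x ∈ M ⊔ Z) (hgx : g * x * g⁻¹ ∈ M ⊔ Z),
        ψ ⟨g * x * g⁻¹, hgx⟩ = ψ ⟨x, hx⟩ := by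
  obtain ⟨π, hπ⟩ := exists_sup_projection M Z hinf
  refine ⟨ω.comp π, fun z hz ↦ ?_, fun g x hx hgx ↦ ?_⟩
  · simpa using congrArg ω (hπ 1 M.one_mem z hz)
  · obtain ⟨m, hm, z, hz, rfl⟩ := mem_sup_of_normal_left.1 hx
    have hconj : g * (m * z) * g⁻¹ = g * m * g⁻¹ * z := by
      simp only [mul_assoc, mem_center_iff.1 (hZ hz) g⁻¹]
    simp only [MonoidHom.comp_apply, hconj, hπ _ (Normal.conj_mem inferInstance m hm g) z hz,
      hπ m hm z hz]

end Subgroup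

open Representation

theorem AllExtendToInertia.exists_extension {G : Type} [Group G] {F : Subgroup G}
    [hF : F.Normal] (hext : AllExtendToInertia G F) (ψ : F →* ℂˣ)
    (hψ : ∀ g x (hx : x ∈ F) (hgx : g * x * g⁻¹ ∈ F), ψ ⟨g * x * g⁻¹, hgx⟩ = ψ ⟨x, hx⟩) :
    ∃ μ : G →* ℂˣ, ∀ x (hx : x ∈ F), (μ x : ℂ) = ψ ⟨x, hx⟩ := by
  let W : FDRep ℂ F := FDRep.of (ofLinearCharacter ψ)
  have hW : Simple W := (FDRep.simple_iff_isIrreducible W).2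
    (isIrreducible_of_finrank_eq_one _ (Module.finrank_self ℂ))
  have hWchar (x : F) : W.character x = ψ x := character_ofLinearCharacter ψ x
  have hinertia : inertia (classFun F W) = ⊤ := by
    refine eq_top_iff.2 fun g _ x ↦ ?_
    by_cases hx : x ∈ F
    · have hgx := hF.conj_mem x hx g
      simp only [classFun, dif_pos hx, dif_pos hgx, hWchar]
      exact congrArg _ (hψ g x hx hgx)
    · have hgx : g * x * g⁻¹ ∉ F := fun h ↦ hx (by simpa [mul_assoc] using hF.conj_mem _ h g⁻¹)
      simp only [classFun, dif_neg hx, dif_neg hgx]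
  obtain ⟨U, hU⟩ := hext W hW
  have hU1 : Module.finrank ℂ U = 1 := by
    have h1 : U.character 1 = W.character 1 := hU 1 (one_mem _) (one_mem _)
    rw [FDRep.char_one, FDRep.char_one, Module.finrank_self] at h1
    exact_mod_cast h1
  let ι : G →* inertia (classFun F W) :=
    (MonoidHom.id G).codRestrict _ fun g ↦ hinertia ▸ Subgroup.mem_top g
  refine ⟨(linearCharacter U.ρ hU1).comp ι, fun x hx ↦ ?_⟩
  rw [MonoidHom.comp_apply, coe_linearCharacter]
  exact (hU x _ hx).trans (hWchar _)

theorem stmt_12_general (G : Type) [Group G]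
    (M Z : Subgroup G) [Z.Normal] (hM : M.Normal)
    (hZc : Z ≤ Subgroup.center G)
    (hsup : M ⊔ Z = fittingSubgroup G) (hinf : M ⊓ Z = ⊥)
    (hext : AllExtendToInertia G (fittingSubgroup G)) :
    charDegrees G = charDegrees (G ⧸ Z) := by
  ext d
  constructor
  · rintro ⟨V, hV, rfl⟩
    rw [FDRep.simple_iff_isIrreducible] at hV
    obtain ⟨ω, hω⟩ := exists_centralCharacter V.ρ Z hZc
    obtain ⟨ψ, hψZ, hψ⟩ := Subgroup.exists_conj_invariant_extension M Z hZc hinf ω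
    rw [← hsup] at hext
    obtain ⟨μ, hμ⟩ := hext.exists_extension ψ hψ
    have : IsTrivial ((twist V.ρ μ⁻¹).comp Z.subtype) := isTrivial_twist_inv_comp_subtype V.ρ
      fun z ↦ by rw [hμ z (Subgroup.mem_sup_right z.2), hψZ z z.2, hω]
    refine ⟨FDRep.of ((twist V.ρ μ⁻¹).ofQuotient Z), (FDRep.simple_iff_isIrreducible _).2 ?_, rfl⟩
    rwa [FDRep.of_ρ', isIrreducible_ofQuotient_iff, isIrreducible_twist_iff]
  · rintro ⟨V, hV, rfl⟩
    refine ⟨FDRep.of (V.ρ.comp (QuotientGroup.mk' Z)), ?_, rfl⟩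
    rw [FDRep.simple_iff_isIrreducible] at hV ⊢
    exact (isIrreducible_comp_iff _ (QuotientGroup.mk'_surjective Z)).2 hV

/-- Lemma 2.3: if `Fit(G) = M × Z` with `Z ≤ Z(G)`, `M ⊴ G`, and every
irreducible character of `Fit(G)` extends to its inertia subgroup, then
`cd(G) = cd(G/Z)` (hence `Δ(G) = Δ(G/Z)`). -/
theorem stmt_12 (G : Type) [Group G] [Finite G] [Group.IsSolvable G]
    (M Z : Subgroup G) [Z.Normal] (hM : M.Normal)
    (hZc : Z ≤ Subgroup.center G)
    (hsup : M ⊔ Z = fittingSubgroup G) (hinf : M ⊓ Z = ⊥)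
    (hext : AllExtendToInertia G (fittingSubgroup G)) :
    charDegrees G = charDegrees (G ⧸ Z) :=
  stmt_12_general G M Z hM hZc hsup hinf hext
end
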